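/- Let X, A, S, Y be random variables on a finite probability space with A binary, satisfying ignorability of A given X with positivity, and surrogacy (A independent of Y given (S, X)). Let Ỹ = E[Y | S, X] and e(x) = P(A=1 | X=x). Then for every x in the support of X, E[A·Y/e(X) − (1−A)·Y/(1−e(X)) | X = x] = E[A·Ỹ/e(X) − (1−A)·Ỹ/(1−e(X)) | X = x]; i.e., the CATE computed with the surrogate index equals the CATE computed with the true outcome. -/
import Mathlib


open Finset
open scoped BigOperators Classical

/-- Probability of an event on a finite space with weights `P`. -/
noncomputable def prb {Ω : Type*} [Fintype Ω] (P : Ω → ℝ) (E : Ω → Prop) : ℝ :=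
  ∑ ω, if E ω then P ω else 0

/-- Expectation of `f` on a finite space with weights `P`. -/
noncomputable def pexp {Ω : Type*} [Fintype Ω] (P : Ω → ℝ) (f : Ω → ℝ) : ℝ :=
  ∑ ω, P ω * f ω

/-- Conditional expectation of `f` given the event `E`. -/
noncomputable def cexp {Ω : Type*} [Fintype Ω] (P : Ω → ℝ) (f : Ω → ℝ) (E : Ω → Prop) : ℝ :=
  (∑ ω, if E ω then P ω * f ω else 0) / prb P E

lemma prb_congr {Ω : Type*} [Fintype Ω] (P : Ω → ℝ) {E1 E2 : Ω → Prop}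
    (h : ∀ ω, E1 ω ↔ E2 ω) : prb P E1 = prb P E2 := by
  unfold prb
  exact Finset.sum_congr rfl fun ω _ => by rw [if_congr (h ω) rfl rfl]

lemma grp {Ω : Type*} [Fintype Ω] (P : Ω → ℝ) (Y : Ω → ℝ) (E : Ω → Prop) :
    ∑ y ∈ Finset.univ.image Y, y * prb P (fun ω => Y ω = y ∧ E ω)
      = ∑ ω, if E ω then P ω * Y ω else 0 := by
  unfold prb
  simp only [Finset.mul_sum, mul_ite, mul_zero]
  rw [Finset.sum_comm]
  refine Finset.sum_congr rfl fun ω _ => ?_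
  by_cases hE : E ω
  · simp only [hE, and_true]
    rw [Finset.sum_ite_eq (Finset.univ.image Y) (Y ω) (fun y => y * P ω)]
    simp [Finset.mem_image_of_mem, mul_comm]
  · simp [hE]

lemma split_sum {Ω 𝒮 : Type*} [Fintype Ω] (S : Ω → 𝒮) (E : Ω → Prop) (F : Ω → ℝ) :
    ∑ ω, (if E ω then F ω else 0)
      = ∑ s ∈ Finset.univ.image S, ∑ ω, if S ω = s ∧ E ω then F ω else 0 := by
  rw [Finset.sum_comm]
  refine Finset.sum_congr rfl fun ω _ => ?_
  by_cases hE : E ω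
  · simp only [hE, and_true]
    rw [Finset.sum_ite_eq (Finset.univ.image S) (S ω) (fun _ => F ω)]
    simp [Finset.mem_image_of_mem]
  · simp [hE]

lemma sum_if_congr {Ω : Type*} [Fintype Ω] {E1 E2 : Ω → Prop}
    [dE1 : ∀ ω, Decidable (E1 ω)] [dE2 : ∀ ω, Decidable (E2 ω)]
    (f : Ω → ℝ) (h : ∀ ω, E1 ω ↔ E2 ω) :
    (∑ ω, if E1 ω then f ω else 0) = ∑ ω, if E2 ω then f ω else 0 :=
  Finset.sum_congr rfl fun ω _ => if_congr (h ω) rfl rfl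

lemma slice0 {Ω 𝒳 𝒮 : Type*} [Fintype Ω]
    (P : Ω → ℝ) (hP : ∀ ω, 0 ≤ P ω)
    (X : Ω → 𝒳) (A : Ω → ℝ) (hA : ∀ ω, A ω = 0 ∨ A ω = 1)
    (S : Ω → 𝒮) (Y : Ω → ℝ)
    (hsur : ∀ (a y : ℝ) (s : 𝒮) (x : 𝒳),
      prb P (fun ω => A ω = a ∧ Y ω = y ∧ S ω = s ∧ X ω = x)
          * prb P (fun ω => S ω = s ∧ X ω = x)
        = prb P (fun ω => A ω = a ∧ S ω = s ∧ X ω = x)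
          * prb P (fun ω => Y ω = y ∧ S ω = s ∧ X ω = x))
    (s : 𝒮) (x : 𝒳) (c1 c2 : ℝ) :
    ∑ ω, (if S ω = s ∧ X ω = x then
        P ω * ((A ω / c1 - (1 - A ω) / c2)
          * (Y ω - cexp P Y (fun ω' => S ω' = s ∧ X ω' = x))) else 0) = 0 := by
  set q : ℝ := prb P (fun ω => S ω = s ∧ X ω = x) with hq
  set T : ℝ := ∑ ω, if S ω = s ∧ X ω = x then P ω * Y ω else 0 with hT
  set T1 : ℝ := ∑ ω, if A ω = 1 ∧ S ω = s ∧ X ω = x then P ω * Y ω else 0 with hT1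
  set T0 : ℝ := ∑ ω, if A ω = 0 ∧ S ω = s ∧ X ω = x then P ω * Y ω else 0 with hT0
  set p1 : ℝ := prb P (fun ω => A ω = 1 ∧ S ω = s ∧ X ω = x) with hp1
  set p0 : ℝ := prb P (fun ω => A ω = 0 ∧ S ω = s ∧ X ω = x) with hp0
  have hcexp : cexp P Y (fun ω' => S ω' = s ∧ X ω' = x) = T / q := by
    unfold cexp
    rw [hT, hq]
    congr!
  have hterm : ∀ ω, (if S ω = s ∧ X ω = x then
        P ω * ((A ω / c1 - (1 - A ω) / c2) * (Y ω - T / q)) else 0)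
      = (1/c1) * (if A ω = 1 ∧ S ω = s ∧ X ω = x then P ω * Y ω else 0)
        - (1/c2) * (if A ω = 0 ∧ S ω = s ∧ X ω = x then P ω * Y ω else 0)
        - (T/(q*c1)) * (if A ω = 1 ∧ S ω = s ∧ X ω = x then P ω else 0)
        + (T/(q*c2)) * (if A ω = 0 ∧ S ω = s ∧ X ω = x then P ω else 0) := by
    intro ω
    by_cases hs : S ω = s ∧ X ω = x
    · rcases hA ω with h | h <;>
        simp only [hs, h, if_true, and_true, true_and, zero_ne_one, one_ne_zero,
          false_and, if_false, if_pos, if_neg, not_false_iff] <;> ring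
    · simp [hs]
  rw [hcexp]
  rw [Finset.sum_congr rfl fun ω _ => hterm ω]
  rw [Finset.sum_add_distrib, Finset.sum_sub_distrib, Finset.sum_sub_distrib,
    ← Finset.mul_sum, ← Finset.mul_sum, ← Finset.mul_sum, ← Finset.mul_sum]
  have hqp1 : (∑ ω, if A ω = 1 ∧ S ω = s ∧ X ω = x then P ω else 0) = p1 := by
    rw [hp1]; unfold prb; congr!
  have hqp0 : (∑ ω, if A ω = 0 ∧ S ω = s ∧ X ω = x then P ω else 0) = p0 := by
    rw [hp0]; unfold prb; congr!
  rw [hqp1, hqp0, ← hT1, ← hT0]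
  -- surrogacy consequences
  have key : ∀ a : ℝ,
      (∑ ω, if A ω = a ∧ S ω = s ∧ X ω = x then P ω * Y ω else 0) * q
        = prb P (fun ω => A ω = a ∧ S ω = s ∧ X ω = x) * T := by
    intro a
    have e1 : (∑ ω, if A ω = a ∧ S ω = s ∧ X ω = x then P ω * Y ω else 0)
        = ∑ y ∈ Finset.univ.image Y,
            y * prb P (fun ω => A ω = a ∧ Y ω = y ∧ S ω = s ∧ X ω = x) := by
      rw [show (∑ y ∈ Finset.univ.image Y,
            y * prb P (fun ω => A ω = a ∧ Y ω = y ∧ S ω = s ∧ X ω = x))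
          = ∑ y ∈ Finset.univ.image Y,
            y * prb P (fun ω => Y ω = y ∧ (A ω = a ∧ S ω = s ∧ X ω = x)) from
        Finset.sum_congr rfl fun y _ => by
          rw [prb_congr P
            (E1 := fun ω => A ω = a ∧ Y ω = y ∧ S ω = s ∧ X ω = x)
            (E2 := fun ω => Y ω = y ∧ (A ω = a ∧ S ω = s ∧ X ω = x))
            (fun ω => by tauto)]]
      rw [grp P Y (fun ω => A ω = a ∧ S ω = s ∧ X ω = x)]
      congr!
    have e2 : T = ∑ y ∈ Finset.univ.image Y,
        y * prb P (fun ω => Y ω = y ∧ S ω = s ∧ X ω = x) := by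
      rw [hT, grp P Y (fun ω => S ω = s ∧ X ω = x)]
      congr!
    rw [e1, e2, Finset.sum_mul, Finset.mul_sum]
    refine Finset.sum_congr rfl fun y _ => ?_
    have h := hsur a y s x
    linear_combination y * h
  have k1 : T1 * q = p1 * T := by rw [hT1, hp1]; exact key 1
  have k0 : T0 * q = p0 * T := by rw [hT0, hp0]; exact key 0
  by_cases hq0 : q = 0
  · have hsum0 : prb P (fun ω => S ω = s ∧ X ω = x) = 0 := by rw [← hq]; exact hq0
    have hz : ∀ ω, (S ω = s ∧ X ω = x) → P ω = 0 := by
      intro ω hω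
      unfold prb at hsum0
      have := (Finset.sum_eq_zero_iff_of_nonneg
        (fun ω' _ => by by_cases h : S ω' = s ∧ X ω' = x <;> simp [h, hP ω'])).mp
        hsum0 ω (Finset.mem_univ ω)
      simpa [hω] using this
    have hT1z : T1 = 0 := Finset.sum_eq_zero fun ω _ => by
      by_cases h : A ω = 1 ∧ S ω = s ∧ X ω = x
      · simp [h, hz ω h.2]
      · simp [h]
    have hT0z : T0 = 0 := Finset.sum_eq_zero fun ω _ => by
      by_cases h : A ω = 0 ∧ S ω = s ∧ X ω = x
      · simp [h, hz ω h.2]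
      · simp [h]
    have hp1z : p1 = 0 := Finset.sum_eq_zero fun ω _ => by
      by_cases h : A ω = 1 ∧ S ω = s ∧ X ω = x
      · simp [prb, h, hz ω h.2]
      · simp [prb, h]
    have hp0z : p0 = 0 := Finset.sum_eq_zero fun ω _ => by
      by_cases h : A ω = 0 ∧ S ω = s ∧ X ω = x
      · simp [prb, h, hz ω h.2]
      · simp [prb, h]
    rw [hT1z, hT0z, hp1z, hp0z]; ring
  · have hT1e : T1 = p1 * T / q := by field_simp; linarith [k1]
    have hT0e : T0 = p0 * T / q := by field_simp; linarith [k0]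
    rw [hT1e, hT0e]; ring

/-- under ignorability, positivity and surrogacy, the CATE computed with the
surrogate index equals the CATE computed with the true outcome, at every covariate value
in the support of `X`. -/
theorem stmt_7 {Ω 𝒳 𝒮 : Type*} [Fintype Ω]
    (P : Ω → ℝ) (hP : ∀ ω, 0 ≤ P ω) (hPsum : ∑ ω, P ω = 1)
    (X : Ω → 𝒳) (A : Ω → ℝ) (hA : ∀ ω, A ω = 0 ∨ A ω = 1)
    (S : Ω → 𝒮) (Y : Ω → ℝ)
    -- ignorability of A given X (A ⫫ (S, Y) | X)
    (hig : ∀ (a y : ℝ) (s : 𝒮) (x : 𝒳),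
      prb P (fun ω => A ω = a ∧ S ω = s ∧ Y ω = y ∧ X ω = x) * prb P (fun ω => X ω = x)
        = prb P (fun ω => A ω = a ∧ X ω = x)
          * prb P (fun ω => S ω = s ∧ Y ω = y ∧ X ω = x))
    -- propensity and positivity
    (e : 𝒳 → ℝ)
    (he : ∀ x, e x = prb P (fun ω => A ω = 1 ∧ X ω = x) / prb P (fun ω => X ω = x))
    (hpos : ∀ x, 0 < prb P (fun ω => X ω = x) → 0 < e x ∧ e x < 1)
    -- surrogacy: A ⫫ Y | (S, X)
    (hsur : ∀ (a y : ℝ) (s : 𝒮) (x : 𝒳),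
      prb P (fun ω => A ω = a ∧ Y ω = y ∧ S ω = s ∧ X ω = x)
          * prb P (fun ω => S ω = s ∧ X ω = x)
        = prb P (fun ω => A ω = a ∧ S ω = s ∧ X ω = x)
          * prb P (fun ω => Y ω = y ∧ S ω = s ∧ X ω = x))
    -- surrogate index Ỹ = E[Y | S, X]
    (Ytil : Ω → ℝ)
    (hYtil : ∀ ω, Ytil ω = cexp P Y (fun ω' => S ω' = S ω ∧ X ω' = X ω)) :
    ∀ x : 𝒳, 0 < prb P (fun ω => X ω = x) →
      cexp P (fun ω => A ω * Y ω / e (X ω) - (1 - A ω) * Y ω / (1 - e (X ω)))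
          (fun ω => X ω = x)
        = cexp P (fun ω => A ω * Ytil ω / e (X ω) - (1 - A ω) * Ytil ω / (1 - e (X ω)))
          (fun ω => X ω = x) := by
  intro x hx
  unfold cexp
  congr 1
  rw [← sub_eq_zero, ← Finset.sum_sub_distrib]
  have step1 : ∀ ω,
      ((if X ω = x then P ω * (A ω * Y ω / e (X ω) - (1 - A ω) * Y ω / (1 - e (X ω))) else 0)
        - (if X ω = x then P ω * (A ω * Ytil ω / e (X ω) - (1 - A ω) * Ytil ω / (1 - e (X ω))) else 0))
      = (if X ω = x then
          P ω * ((A ω / e x - (1 - A ω) / (1 - e x)) * (Y ω - Ytil ω)) else 0) := by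
    intro ω
    by_cases h : X ω = x
    · rw [if_pos h, if_pos h, if_pos h, h]; ring
    · rw [if_neg h, if_neg h, if_neg h]; ring
  rw [Finset.sum_congr rfl fun ω _ => step1 ω]
  rw [split_sum S (fun ω => X ω = x)
    (fun ω => P ω * ((A ω / e x - (1 - A ω) / (1 - e x)) * (Y ω - Ytil ω)))]
  refine Finset.sum_eq_zero fun s _ => ?_
  have step2 : ∀ ω,
      (if S ω = s ∧ X ω = x then
          P ω * ((A ω / e x - (1 - A ω) / (1 - e x)) * (Y ω - Ytil ω)) else 0)
      = (if S ω = s ∧ X ω = x then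
          P ω * ((A ω / e x - (1 - A ω) / (1 - e x))
            * (Y ω - cexp P Y (fun ω' => S ω' = s ∧ X ω' = x))) else 0) := by
    intro ω
    by_cases h : S ω = s ∧ X ω = x
    · rw [if_pos h, if_pos h, hYtil ω, h.1, h.2]
    · rw [if_neg h, if_neg h]
  rw [Finset.sum_congr rfl fun ω _ => step2 ω]
  exact slice0 P hP X A hA S Y hsur s x (e x) (1 - e x)
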